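/- arXiv:2212.11176 — 2 statements merged into one kernel-verified Lean document; each statement's English description precedes it below -/
import Mathlib

section
/- The set of perfect powers { m^k : m ∈ ℕ, k ≥ 2 } has upper Buck density zero. -/
open Filter Set

/-- Upper asymptotic density. -/
noncomputable def upperDensity (X : Set ℕ) : ℝ :=
  Filter.limsup (fun n : ℕ => ((X ∩ Set.Icc 1 n).ncard : ℝ) / n) Filter.atTop

/-- `A` is a finite union of arithmetic progressions `k·ℕ + h` with `k ≥ 1`. -/
def IsAPUnion (A : Set ℕ) : Prop :=
  ∃ S : Finset (ℕ × ℕ), (∀ p ∈ S, 1 ≤ p.1) ∧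
    A = ⋃ p ∈ S, {n : ℕ | ∃ m : ℕ, n = p.1 * m + p.2}

/-- Upper Buck density. -/
noncomputable def buckUpper (X : Set ℕ) : ℝ :=
  sInf {d : ℝ | ∃ A : Set ℕ, IsAPUnion A ∧ X ⊆ A ∧ d = upperDensity A}

/-- Lower Buck density. -/
noncomputable def buckLower (X : Set ℕ) : ℝ := 1 - buckUpper Xᶜ

/-- Sumset of two subsets of ℕ. -/
def sumset (X Y : Set ℕ) : Set ℕ := {n : ℕ | ∃ x ∈ X, ∃ y ∈ Y, n = x + y}

/-- An arithmetic upper quasi-density on ℕ. -/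
structure ArithUpperQuasiDensity where
  toFun : Set ℕ → ℝ
  le_one : ∀ X : Set ℕ, toFun X ≤ 1
  univ_eq : toFun Set.univ = 1
  subadd : ∀ X Y : Set ℕ, toFun (X ∪ Y) ≤ toFun X + toFun Y
  scale : ∀ (X : Set ℕ) (k h : ℕ), 1 ≤ k →
    toFun ((fun x => k * x + h) '' X) = toFun X / k

/-- Conjugate (lower) quasi-density. -/
noncomputable def ArithUpperQuasiDensity.conj (μ : ArithUpperQuasiDensity)
    (X : Set ℕ) : ℝ := 1 - μ.toFun Xᶜ

/-! ### Auxiliary lemmas -/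

lemma density_fn_le_one' (A : Set ℕ) (n : ℕ) : ((A ∩ Set.Icc 1 n).ncard : ℝ) / n ≤ 1 := by
  rcases Nat.eq_zero_or_pos n with h | h
  · simp [h]
  · rw [div_le_one (by exact_mod_cast h)]
    have h1 : (A ∩ Set.Icc 1 n).ncard ≤ (Set.Icc 1 n).ncard :=
      Set.ncard_le_ncard inter_subset_right (Set.finite_Icc _ _)
    have h2 : (Set.Icc 1 n).ncard = n := by
      rw [← Finset.coe_Icc, Set.ncard_coe_finset, Nat.card_Icc]; omega
    exact_mod_cast h1.trans_eq h2

lemma upperDensity_nonneg (A : Set ℕ) : 0 ≤ upperDensity A := by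
  apply Filter.le_limsup_of_frequently_le
  · exact Filter.Frequently.of_forall (fun n => by positivity)
  · exact Filter.isBoundedUnder_of ⟨1, fun n => density_fn_le_one' A n⟩

/-- Good residues mod `p^2`: those not exactly divisible by `p` once. -/
def goodRes (p : ℕ) : Finset ℕ := (Finset.range (p^2)).filter (fun r => p ∣ r → p^2 ∣ r)

lemma card_goodRes (p : ℕ) (hp : p.Prime) : (goodRes p).card = p^2 - (p - 1) := by
  have hpos := hp.pos
  have hbad : (Finset.range (p^2)).filter (fun r => ¬(p ∣ r → p^2 ∣ r))
      = (Finset.Ico 1 p).image (fun u => p * u) := by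
    ext r
    simp only [Finset.mem_filter, Finset.mem_range, Finset.mem_image, Finset.mem_Ico,
      _root_.not_imp]
    constructor
    · rintro ⟨hr, ⟨u, rfl⟩, hnd⟩
      refine ⟨u, ⟨?_, ?_⟩, rfl⟩
      · rcases Nat.eq_zero_or_pos u with h | h
        · exact absurd (by simp [h]) hnd
        · exact h
      · by_contra hc
        push_neg at hc
        nlinarith [hr]
    · rintro ⟨u, ⟨hu1, hu2⟩, rfl⟩
      refine ⟨by nlinarith, ⟨u, rfl⟩, ?_⟩
      intro hd
      rw [pow_two] at hd
      have h1 := (Nat.mul_dvd_mul_iff_left hpos).mp hd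
      have := Nat.le_of_dvd hu1 h1
      omega
  have hinj : Function.Injective (fun u => p * u) :=
    fun a b h => by simpa [Nat.mul_left_cancel_iff hpos] using h
  have hcardbad : ((Finset.range (p^2)).filter (fun r => ¬(p ∣ r → p^2 ∣ r))).card = p - 1 := by
    rw [hbad, Finset.card_image_of_injective _ hinj, Nat.card_Ico]
  have hsum := Finset.card_filter_add_card_filter_not
    (s := Finset.range (p^2)) (p := fun r => p ∣ r → p^2 ∣ r)
  rw [Finset.card_range] at hsum
  unfold goodRes
  omega

/-- CRT-type counting: residues mod `∏ p²` that are good for every `p`. -/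
lemma card_T_le (s : Finset ℕ) (hs : ∀ p ∈ s, p.Prime) :
    ((Finset.range (∏ p ∈ s, p^2)).filter (fun t => ∀ p ∈ s, p ∣ t → p^2 ∣ t)).card
      ≤ ∏ p ∈ s, (goodRes p).card := by
  classical
  rw [← Finset.card_pi]
  apply Finset.card_le_card_of_injOn (fun t => fun p _ => t % p^2)
  · intro t ht
    rw [Finset.mem_coe, Finset.mem_filter, Finset.mem_range] at ht
    rw [Finset.mem_coe, Finset.mem_pi]
    intro p hp
    have hppos : 0 < p^2 := pow_pos (hs p hp).pos 2
    rw [goodRes, Finset.mem_filter, Finset.mem_range]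
    refine ⟨Nat.mod_lt _ hppos, fun hd => ?_⟩
    have hpd : p ∣ t := (Nat.dvd_mod_iff (dvd_pow_self p two_ne_zero)).mp hd
    exact (Nat.dvd_mod_iff dvd_rfl).mpr (ht.2 p hp hpd)
  · intro t ht t' ht' heq
    rw [Finset.coe_filter, Set.mem_setOf_eq, Finset.mem_range] at ht ht'
    have hdvd : ∀ p ∈ s, ((p:ℤ)^2) ∣ ((t:ℤ) - t') := by
      intro p hp
      have h1 : t % p^2 = t' % p^2 := congrFun (congrFun heq p) hp
      have := Nat.ModEq.dvd (Nat.ModEq.symm h1)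
      exact_mod_cast (by exact_mod_cast this : ((p^2 : ℕ):ℤ) ∣ ((t:ℤ) - t'))
    have hcop : (↑s : Set ℕ).Pairwise (Function.onFun IsCoprime (fun p => ((p:ℤ)^2))) := by
      intro p hp q hq hne
      have : Nat.Coprime (p^2) (q^2) :=
        Nat.Coprime.pow 2 2 ((Nat.coprime_primes (hs p hp) (hs q hq)).mpr hne)
      rw [Function.onFun, Int.isCoprime_iff_gcd_eq_one]
      exact_mod_cast this
    have hQdvd : ((∏ p ∈ s, p^2 : ℕ) : ℤ) ∣ ((t:ℤ) - t') := by
      have := Finset.prod_dvd_of_coprime hcop hdvd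
      simpa [Nat.cast_prod] using this
    have habs : |(t:ℤ) - t'| < ((∏ p ∈ s, p^2 : ℕ) : ℤ) := by
      have h1 : (t:ℤ) < ((∏ p ∈ s, p^2 : ℕ) : ℤ) := by exact_mod_cast ht.1
      have h2 : (t':ℤ) < ((∏ p ∈ s, p^2 : ℕ) : ℤ) := by exact_mod_cast ht'.1
      have h3 : (0:ℤ) ≤ t := Int.ofNat_nonneg t
      have h4 : (0:ℤ) ≤ t' := Int.ofNat_nonneg t'
      rw [abs_sub_lt_iff]
      omega
    have := Int.eq_zero_of_abs_lt_dvd hQdvd habs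
    omega

/-- The density ratio of the cover coming from primes below `P`. -/
noncomputable def coverRatio (P : ℕ) : ℝ :=
  ∏ p ∈ P.primesBelow, (((p:ℝ)^2 - p + 1) / (p:ℝ)^2)

lemma sum_tendsto_atBot :
    Tendsto (fun P : ℕ => ∑ p ∈ P.primesBelow, (1/(p:ℝ)^2 - 1/p)) atTop atBot := by
  set g1 : ℕ → ℝ := Set.indicator {p | p.Prime} (fun n => 1/(n:ℝ)) with hg1
  set g2 : ℕ → ℝ := Set.indicator {p | p.Prime} (fun n => 1/(n:ℝ)^2) with hg2
  have hS1 : Tendsto (fun P : ℕ => ∑ n ∈ Finset.range P, g1 n) atTop atTop := by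
    rw [← not_summable_iff_tendsto_nat_atTop_of_nonneg
      (fun n => Set.indicator_nonneg (fun x _ => by positivity) n)]
    exact not_summable_one_div_on_primes
  have hg2sum : Summable g2 := by
    apply Summable.of_nonneg_of_le (fun n => Set.indicator_nonneg (fun x _ => by positivity) n)
      (fun n => Set.indicator_le_self' (fun x _ => by positivity) n)
    exact (Real.summable_one_div_nat_pow).mpr one_lt_two
  obtain ⟨L, hL⟩ := hg2sum
  have hS2 : Tendsto (fun P : ℕ => ∑ n ∈ Finset.range P, g2 n) atTop (nhds L) :=
    hL.tendsto_sum_nat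
  have key : Tendsto (fun P : ℕ =>
      (∑ n ∈ Finset.range P, g2 n) - (∑ n ∈ Finset.range P, g1 n)) atTop atBot := by
    have h1 : Tendsto (fun P : ℕ =>
        (∑ n ∈ Finset.range P, g1 n) - (∑ n ∈ Finset.range P, g2 n)) atTop atTop := by
      apply tendsto_atTop_add_right_of_le' _ (-(L+1)) hS1
      filter_upwards [hS2.eventually (eventually_le_nhds (lt_add_one L))] with P hP
      linarith
    have := tendsto_neg_atTop_atBot.comp h1
    refine this.congr (fun P => ?_); simp [Function.comp]
  apply key.congr
  intro P
  have hconv : ∀ (f : ℕ → ℝ), ∑ n ∈ Finset.range P, Set.indicator {p | p.Prime} f n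
      = ∑ p ∈ P.primesBelow, f p := by
    intro f
    rw [Nat.primesBelow, Finset.sum_filter]
    apply Finset.sum_congr rfl
    intro n _
    simp [Set.indicator_apply]
  rw [Finset.sum_sub_distrib, ← hconv (fun n => 1/(n:ℝ)^2), ← hconv (fun n => 1/(n:ℝ))]

lemma coverRatio_tendsto : Tendsto coverRatio atTop (nhds 0) := by
  have hub : ∀ P, coverRatio P ≤ Real.exp (∑ p ∈ P.primesBelow, (1/(p:ℝ)^2 - 1/p)) := by
    intro P
    rw [Real.exp_sum]
    apply Finset.prod_le_prod
    · intro p hp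
      have hp1 : (1:ℝ) ≤ p := by exact_mod_cast (Nat.prime_of_mem_primesBelow hp).one_lt.le
      have hnum : (0:ℝ) ≤ (p:ℝ)^2 - p + 1 := by nlinarith
      positivity
    · intro p hp
      have hp1 : (1:ℝ) ≤ p := by exact_mod_cast (Nat.prime_of_mem_primesBelow hp).one_lt.le
      have hp0 : (0:ℝ) < p := by linarith
      have heq : ((p:ℝ)^2 - p + 1) / (p:ℝ)^2 = 1 + (1/(p:ℝ)^2 - 1/p) := by
        field_simp; ring
      rw [heq, add_comm]
      exact Real.add_one_le_exp _
  have hlb : ∀ P, 0 ≤ coverRatio P := by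
    intro P
    apply Finset.prod_nonneg
    intro p hp
    have hp1 : (1:ℝ) ≤ p := by exact_mod_cast (Nat.prime_of_mem_primesBelow hp).one_lt.le
    have hnum : (0:ℝ) ≤ (p:ℝ)^2 - p + 1 := by nlinarith
    positivity
  have hexp : Tendsto (fun P : ℕ => Real.exp (∑ p ∈ P.primesBelow, (1/(p:ℝ)^2 - 1/p)))
      atTop (nhds 0) := Real.tendsto_exp_atBot.comp sum_tendsto_atBot
  exact tendsto_of_tendsto_of_tendsto_of_le_of_le tendsto_const_nhds hexp hlb hub

/-- Density bound for a union of `T.card` progressions with common difference `Q`. -/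
lemma upperDensity_AP_le (Q : ℕ) (hQ : 0 < Q) (T : Finset ℕ) :
    upperDensity (⋃ p ∈ T.image (fun t => (Q, t)), {n : ℕ | ∃ m : ℕ, n = p.1 * m + p.2})
      ≤ (T.card : ℝ) / Q := by
  set A := ⋃ p ∈ T.image (fun t => (Q, t)), {n : ℕ | ∃ m : ℕ, n = p.1 * m + p.2} with hA
  have hcount : ∀ n : ℕ, (A ∩ Set.Icc 1 n).ncard ≤ T.card * (n / Q + 1) := by
    intro n
    have hsub : A ∩ Set.Icc 1 n ⊆
        ↑((T ×ˢ Finset.range (n / Q + 1)).image (fun q => Q * q.2 + q.1)) := by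
      rintro x ⟨hxA, hx1, hxn⟩
      simp only [hA, Set.mem_iUnion, Finset.mem_image, Set.mem_setOf_eq] at hxA
      obtain ⟨pr, ⟨t, htT, rfl⟩, m, rfl⟩ := hxA
      simp only [Finset.coe_image, Set.mem_image, Finset.mem_coe, Finset.mem_product,
        Finset.mem_range]
      refine ⟨(t, m), ⟨htT, ?_⟩, rfl⟩
      have hmn : m * Q ≤ n := by
        calc m * Q = Q * m := Nat.mul_comm _ _
        _ ≤ Q * m + t := Nat.le_add_right _ _
        _ ≤ n := hxn
      have := (Nat.le_div_iff_mul_le hQ).mpr hmn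
      omega
    calc (A ∩ Set.Icc 1 n).ncard
        ≤ (↑((T ×ˢ Finset.range (n / Q + 1)).image (fun q => Q * q.2 + q.1)) : Set ℕ).ncard :=
          Set.ncard_le_ncard hsub (Finset.finite_toSet _)
      _ = ((T ×ˢ Finset.range (n / Q + 1)).image (fun q => Q * q.2 + q.1)).card :=
          Set.ncard_coe_finset _
      _ ≤ (T ×ˢ Finset.range (n / Q + 1)).card := Finset.card_image_le
      _ = T.card * (n / Q + 1) := by rw [Finset.card_product, Finset.card_range]
  have hbound : ∀ᶠ n : ℕ in atTop, ((A ∩ Set.Icc 1 n).ncard : ℝ) / n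
      ≤ (T.card : ℝ) / Q + (T.card : ℝ) / n := by
    filter_upwards [Filter.eventually_ge_atTop 1] with n hn
    have hn0 : (0:ℝ) < n := by exact_mod_cast hn
    have h1 : ((A ∩ Set.Icc 1 n).ncard : ℝ) ≤ (T.card : ℝ) * ((n:ℝ)/Q + 1) := by
      have hc := hcount n
      have h2 : ((n / Q : ℕ) : ℝ) ≤ (n:ℝ)/Q := Nat.cast_div_le
      have h3 : ((A ∩ Set.Icc 1 n).ncard : ℝ) ≤ (T.card : ℝ) * (((n/Q : ℕ):ℝ) + 1) := by
        exact_mod_cast hc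
      nlinarith [h3, h2, (by positivity : (0:ℝ) ≤ (T.card : ℝ))]
    have hQ0 : (0:ℝ) < Q := by exact_mod_cast hQ
    rw [div_le_iff₀ hn0]
    have heq : ((T.card : ℝ) / Q + (T.card : ℝ) / n) * n = (T.card : ℝ) * ((n:ℝ)/Q + 1) := by
      field_simp
    rw [heq]; exact h1
  have hg : Tendsto (fun n : ℕ => (T.card : ℝ) / Q + (T.card : ℝ) / n) atTop
      (nhds ((T.card : ℝ) / Q)) := by
    simpa using (tendsto_const_div_atTop_nhds_zero_nat (T.card : ℝ)).const_add ((T.card:ℝ)/Q)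
  calc upperDensity A
      ≤ Filter.limsup (fun n : ℕ => (T.card : ℝ) / Q + (T.card : ℝ) / n) atTop := by
        refine Filter.limsup_le_limsup hbound ?_ ?_
        · exact isCoboundedUnder_le_of_le atTop (fun n => by positivity)
        · exact hg.isBoundedUnder_le
    _ = (T.card : ℝ) / Q := hg.limsup_eq

theorem stmt8 : buckUpper {n : ℕ | ∃ m k : ℕ, 2 ≤ k ∧ n = m ^ k} = 0 := by
  classical
  set X : Set ℕ := {n : ℕ | ∃ m k : ℕ, 2 ≤ k ∧ n = m ^ k} with hX
  set D : Set ℝ := {d : ℝ | ∃ A : Set ℕ, IsAPUnion A ∧ X ⊆ A ∧ d = upperDensity A} with hD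
  have hBdd : BddBelow D := by
    refine ⟨0, ?_⟩
    rintro d ⟨A, _, _, rfl⟩
    exact upperDensity_nonneg A
  have hmem : ∀ P : ℕ, ∃ d ∈ D, d ≤ coverRatio P := by
    intro P
    set s := P.primesBelow with hs
    have hsprime : ∀ p ∈ s, p.Prime := fun p hp => Nat.prime_of_mem_primesBelow hp
    set Q := ∏ p ∈ s, p^2 with hQdef
    have hQpos : 0 < Q := Finset.prod_pos (fun p hp => pow_pos (hsprime p hp).pos 2)
    set T := (Finset.range Q).filter (fun t => ∀ p ∈ s, p ∣ t → p^2 ∣ t) with hT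
    set A := ⋃ p ∈ T.image (fun t => (Q, t)), {n : ℕ | ∃ m : ℕ, n = p.1 * m + p.2} with hA
    have hAP : IsAPUnion A := by
      refine ⟨T.image (fun t => (Q, t)), ?_, rfl⟩
      intro pr hpr
      obtain ⟨t, _, rfl⟩ := Finset.mem_image.mp hpr
      exact hQpos
    have hXA : X ⊆ A := by
      rintro n ⟨m, k, hk, rfl⟩
      have htT : m ^ k % Q ∈ T := by
        rw [hT, Finset.mem_filter, Finset.mem_range]
        refine ⟨Nat.mod_lt _ hQpos, fun p hp hpt => ?_⟩
        have hprime := hsprime p hp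
        have hp2Q : p^2 ∣ Q := Finset.dvd_prod_of_mem (fun p => p^2) hp
        have hpQ : p ∣ Q := dvd_trans (dvd_pow_self p two_ne_zero) hp2Q
        have hpn : p ∣ m ^ k := (Nat.dvd_mod_iff hpQ).mp hpt
        have hpm : p ∣ m := hprime.dvd_of_dvd_pow hpn
        have hp2n : p^2 ∣ m ^ k := dvd_trans (pow_dvd_pow_of_dvd hpm 2) (pow_dvd_pow m hk)
        exact (Nat.dvd_mod_iff hp2Q).mpr hp2n
      simp only [hA, Set.mem_iUnion, Set.mem_setOf_eq]
      exact ⟨(Q, m ^ k % Q), Finset.mem_image.mpr ⟨_, htT, rfl⟩,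
        m ^ k / Q, (Nat.div_add_mod (m ^ k) Q).symm⟩
    refine ⟨upperDensity A, ⟨A, hAP, hXA, rfl⟩, ?_⟩
    have h1 : upperDensity A ≤ (T.card : ℝ) / Q := upperDensity_AP_le Q hQpos T
    have hcardR : (T.card : ℝ) ≤ ∏ p ∈ s, ((goodRes p).card : ℝ) := by
      rw [← Nat.cast_prod]
      exact_mod_cast card_T_le s hsprime
    have hcardval : ∀ p ∈ s, ((goodRes p).card : ℝ) = (p:ℝ)^2 - p + 1 := by
      intro p hp
      have hprime := hsprime p hp
      have hp1 : 1 ≤ p := hprime.one_lt.le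
      have hple : p ≤ p^2 := Nat.le_self_pow two_ne_zero p
      rw [card_goodRes p hprime, Nat.cast_sub (by omega), Nat.cast_sub hp1]
      push_cast
      ring
    have hQR : (Q:ℝ) = ∏ p ∈ s, (p:ℝ)^2 := by
      rw [hQdef]; push_cast; rfl
    have hratio : coverRatio P = (∏ p ∈ s, ((p:ℝ)^2 - p + 1)) / (Q:ℝ) := by
      rw [coverRatio, hQR, ← Finset.prod_div_distrib]
    refine h1.trans ?_
    rw [hratio, ← Finset.prod_congr rfl hcardval]
    have hQ0 : (0:ℝ) < Q := by exact_mod_cast hQpos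
    exact div_le_div_of_nonneg_right hcardR hQ0.le |>.trans_eq rfl
  have hne : D.Nonempty := by
    obtain ⟨d, hd, _⟩ := hmem 0
    exact ⟨d, hd⟩
  have h0 : 0 ≤ sInf D := by
    apply le_csInf hne
    rintro d ⟨A, _, _, rfl⟩
    exact upperDensity_nonneg A
  have hle : ∀ P : ℕ, sInf D ≤ coverRatio P := by
    intro P
    obtain ⟨d, hd, hdc⟩ := hmem P
    exact (csInf_le hBdd hd).trans hdc
  have hfinal : sInf D ≤ 0 := ge_of_tendsto' coverRatio_tendsto hle
  have : buckUpper X = sInf D := rfl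
  rw [this]
  linarith
end

section
/- The set { n! + n : n ∈ ℕ } has upper Buck density equal to 1. -/
open Filter Set

theorem upperDensity_eq_one {A : Set ℕ} (h : ∃ N, ∀ n ≥ N, n ∈ A) :
    upperDensity A = 1 := by
  obtain ⟨N, hN⟩ := h
  set N' := N + 1 with hN'
  have key : Tendsto (fun n : ℕ => ((A ∩ Set.Icc 1 n).ncard : ℝ) / n) atTop (nhds 1) := by
    have hg : Tendsto (fun n : ℕ => 1 - (N' : ℝ) / n) atTop (nhds 1) := by
      have := (tendsto_const_nhds : Tendsto (fun _ : ℕ => (1:ℝ)) atTop (nhds 1)).sub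
        (tendsto_const_div_atTop_nhds_zero_nat (N' : ℝ))
      simpa using this
    refine tendsto_of_tendsto_of_tendsto_of_le_of_le' hg tendsto_const_nhds ?_ ?_
    · filter_upwards [eventually_ge_atTop N'] with n hn
      have hsub : Set.Icc N' n ⊆ A ∩ Set.Icc 1 n := by
        intro x hx
        simp only [Set.mem_Icc] at hx
        exact ⟨hN x (by omega), by simp only [Set.mem_Icc]; omega⟩
      have hfin : (A ∩ Set.Icc 1 n).Finite :=
        (Set.finite_Icc 1 n).subset Set.inter_subset_right
      have hcard : (Set.Icc N' n).ncard ≤ (A ∩ Set.Icc 1 n).ncard :=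
        Set.ncard_le_ncard hsub hfin
      have h1 : (Set.Icc N' n).ncard = n + 1 - N' := by
        rw [← Finset.coe_Icc, Set.ncard_coe_finset, Nat.card_Icc]
      have hnp : (0:ℝ) < n := by
        have : 0 < n := by omega
        exact_mod_cast this
      have h2 : ((n + 1 - N' : ℕ) : ℝ) ≤ ((A ∩ Set.Icc 1 n).ncard : ℝ) := by
        exact_mod_cast h1 ▸ hcard
      have h3 : (n : ℝ) - N' ≤ ((n + 1 - N' : ℕ) : ℝ) := by
        rw [Nat.cast_sub (by omega)]
        push_cast; linarith
      have heq : 1 - (N' : ℝ) / n = ((n : ℝ) - N') / n := by field_simp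
      rw [heq]
      gcongr
      linarith
    · filter_upwards [eventually_ge_atTop 1] with n hn
      have hcard : (A ∩ Set.Icc 1 n).ncard ≤ n := by
        have := Set.ncard_le_ncard (Set.inter_subset_right (s := A) (t := Set.Icc 1 n))
          (Set.finite_Icc 1 n)
        rw [show (Set.Icc 1 n : Set ℕ) = ↑(Finset.Icc 1 n) from (Finset.coe_Icc 1 n).symm]
        rwa [show (Set.Icc 1 n : Set ℕ) = ↑(Finset.Icc 1 n) from (Finset.coe_Icc 1 n).symm,
          Set.ncard_coe_finset, Nat.card_Icc, Nat.add_sub_cancel] at this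
      have hnp : (0:ℝ) < n := by exact_mod_cast hn
      rw [div_le_one hnp]
      exact_mod_cast hcard
  exact key.limsup_eq

theorem cofinite_of_cover {A : Set ℕ} (hA : IsAPUnion A)
    (hX : {x : ℕ | ∃ n : ℕ, x = Nat.factorial n + n} ⊆ A) :
    ∃ N, ∀ n ≥ N, n ∈ A := by
  obtain ⟨S, hS1, rfl⟩ := hA
  set K := ∏ p ∈ S, p.1 with hK
  have hKpos : 1 ≤ K := Finset.one_le_prod' hS1
  refine ⟨S.sup Prod.snd, fun n hn => ?_⟩
  -- the witness
  set w := Nat.factorial (K + n % K) + (K + n % K) with hw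
  have hwX : w ∈ {x : ℕ | ∃ m : ℕ, x = Nat.factorial m + m} := ⟨K + n % K, rfl⟩
  have hwA := hX hwX
  simp only [Set.mem_iUnion, Set.mem_setOf_eq] at hwA
  obtain ⟨p, hpS, m, hm⟩ := hwA
  have hpK : p.1 ∣ K := Finset.dvd_prod_of_mem Prod.fst hpS
  have hKfac : K ∣ Nat.factorial (K + n % K) := Nat.dvd_factorial hKpos (by omega)
  -- w ≡ n [MOD K]
  have hwn : w ≡ n [MOD K] := by
    have h1 : w ≡ n % K [MOD K] := by
      obtain ⟨c, hc⟩ := hKfac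
      show w % K = (n % K) % K
      rw [hw, hc, Nat.mul_add_mod, Nat.add_mod_left]
    exact h1.trans (Nat.mod_modEq n K)
  have hmod : n ≡ p.2 [MOD p.1] := by
    have h2 : w ≡ p.2 [MOD p.1] := by
      show w % p.1 = p.2 % p.1
      rw [hm, Nat.mul_add_mod]
    exact ((Nat.ModEq.of_dvd hpK hwn).symm.trans h2)
  have hge : p.2 ≤ n := le_trans (Finset.le_sup hpS) hn
  have hdvd : p.1 ∣ n - p.2 := (Nat.modEq_iff_dvd' hge).mp hmod.symm
  obtain ⟨c, hc⟩ := hdvd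
  simp only [Set.mem_iUnion, Set.mem_setOf_eq]
  exact ⟨p, hpS, c, by omega⟩

theorem isAPUnion_univ : IsAPUnion (Set.univ : Set ℕ) := by
  refine ⟨{(1, 0)}, by simp, ?_⟩
  ext n
  simp

theorem stmt10 : buckUpper {x : ℕ | ∃ n : ℕ, x = Nat.factorial n + n} = 1 := by
  have hset : {d : ℝ | ∃ A : Set ℕ, IsAPUnion A ∧
      {x : ℕ | ∃ n : ℕ, x = Nat.factorial n + n} ⊆ A ∧ d = upperDensity A} = {1} := by
    ext d
    simp only [Set.mem_setOf_eq, Set.mem_singleton_iff]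
    constructor
    · rintro ⟨A, hA, hX, rfl⟩
      exact upperDensity_eq_one (cofinite_of_cover hA hX)
    · rintro rfl
      exact ⟨Set.univ, isAPUnion_univ, Set.subset_univ _,
        (upperDensity_eq_one ⟨0, fun n _ => Set.mem_univ n⟩).symm⟩
  rw [buckUpper, hset, csInf_singleton]
end
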